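/- Consider the target function f(x,y) = y₁y₂y₃·Q_S(x₁,x₂,x₃) with Q_S(x) = 1 - (1-x₁)(1-x₂)(1-x₃)/4 - (1+x₁)(1+x₂)(1+x₃)/4, and uniformly random (x₁,x₂,x₃,y₁,y₂,y₃) ∈ {-1,1}⁶. Suppose party 3's guess G₃ is an arbitrary {-1,1}-valued function of (x₃, y₃, m₁, m₂), where m₁ is a {-1,1}-valued function of (x₁, x₂, y₁) and m₂ is a {-1,1}-valued function of (x₁, x₂, y₂). Then the probability that G₃ = f is at most 3/4. -/

import Mathlib

/-
Guess and target are `±1`-valued, so the success probability is `1/2 + 𝔼[G₃ f]/2`. A `±1`-valued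
message of a single bit `y` is constant or `±y`; summing over `y₁, y₂` therefore factors the
correlation as `∑_{x₁,x₂} c(x₁,x₂) ∑_{x₃} QS(x₁,x₂,x₃) e(x₃)` with `|c| ≤ 1`, where `e(x₃)` is a
sum of `Γ = 8` terms of size at most one. For `x ∈ {±1}³` the inner sums are `±e(1) ± e(-1)`, and
`∑_{x₁,x₂} |∑_{x₃} QS e| = 2 (|e 1 - e (-1)| + |e 1 + e (-1)|) ≤ 4 · 8`. Hence `𝔼[G₃ f] ≤ 1/2`.
-/

noncomputable def QS (x₁ x₂ x₃ : ℝ) : ℝ :=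
  1 - (1 - x₁) * (1 - x₂) * (1 - x₃) / 4 - (1 + x₁) * (1 + x₂) * (1 + x₃) / 4

notation "pm" => ({-1, 1} : Finset ℝ)

open Finset

lemma mem_pm_iff {a : ℝ} : a ∈ pm ↔ a = 1 ∨ a = -1 := by
  simp [or_comm]

lemma sum_pm (f : ℝ → ℝ) : ∑ x ∈ pm, f x = f (-1) + f 1 :=
  sum_pair (by norm_num)

lemma mul_mem_pm {a b : ℝ} (ha : a ∈ pm) (hb : b ∈ pm) : a * b ∈ pm := by
  rcases mem_pm_iff.1 ha with rfl | rfl <;> rcases mem_pm_iff.1 hb with rfl | rfl <;> simp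

lemma QS_mem_pm {x₁ x₂ x₃ : ℝ} (h₁ : x₁ ∈ pm) (h₂ : x₂ ∈ pm) (h₃ : x₃ ∈ pm) :
    QS x₁ x₂ x₃ ∈ pm := by
  rcases mem_pm_iff.1 h₁ with rfl | rfl <;> rcases mem_pm_iff.1 h₂ with rfl | rfl <;>
    rcases mem_pm_iff.1 h₃ with rfl | rfl <;> norm_num [QS]

lemma abs_le_one_of_mem_pm {a : ℝ} (ha : a ∈ pm) : |a| ≤ 1 := by
  rcases mem_pm_iff.1 ha with rfl | rfl <;> simp

lemma ite_eq_eq_one_add_mul_div_two {a b : ℝ} (ha : a ∈ pm) (hb : b ∈ pm) :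
    (if a = b then (1 : ℝ) else 0) = (1 + a * b) / 2 := by
  rcases mem_pm_iff.1 ha with rfl | rfl <;> rcases mem_pm_iff.1 hb with rfl | rfl <;> norm_num

-- The degree-one Fourier coefficient `𝔼_y [y m(y)]` of a function of one bit.
noncomputable def linearCoeff (m : ℝ → ℝ) : ℝ := (m 1 - m (-1)) / 2

lemma abs_linearCoeff_le_one {m : ℝ → ℝ} (hm : ∀ y ∈ pm, m y ∈ pm) :
    |linearCoeff m| ≤ 1 := by
  rcases mem_pm_iff.1 (hm 1 (by simp)) with h | h <;>
    rcases mem_pm_iff.1 (hm (-1) (by simp)) with h' | h' <;> norm_num [linearCoeff, h, h']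

-- A `±1`-valued function of one bit is constant or `±id`.
lemma sum_pm_mul_comp {m : ℝ → ℝ} (hm : ∀ y ∈ pm, m y ∈ pm) (h : ℝ → ℝ) :
    ∑ y ∈ pm, y * h (m y) = linearCoeff m * ∑ u ∈ pm, u * h u := by
  rcases mem_pm_iff.1 (hm 1 (by simp)) with e | e <;>
    rcases mem_pm_iff.1 (hm (-1) (by simp)) with e' | e' <;>
    simp only [sum_pm, linearCoeff, e, e'] <;> ring

lemma sum_pm_mul_sum_pm_mul_comp {m n : ℝ → ℝ} (hm : ∀ y ∈ pm, m y ∈ pm)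
    (hn : ∀ y ∈ pm, n y ∈ pm) (g : ℝ → ℝ → ℝ) :
    ∑ y₁ ∈ pm, y₁ * ∑ y₂ ∈ pm, y₂ * g (m y₁) (n y₂) =
      linearCoeff m * linearCoeff n * ∑ u ∈ pm, u * ∑ v ∈ pm, v * g u v := by
  simp only [sum_pm_mul_comp hn, mul_left_comm _ (linearCoeff n), ← mul_sum]
  rw [sum_pm_mul_comp hm fun u => ∑ v ∈ pm, v * g u v]
  ring

lemma abs_sum_pm_mul_le {f : ℝ → ℝ} {B : ℝ} (hf : ∀ x ∈ pm, |f x| ≤ B) :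
    |∑ x ∈ pm, x * f x| ≤ 2 * B := by
  have h₁ := hf 1 (by simp)
  have h₂ := hf (-1) (by simp)
  rw [sum_pm]
  calc |-1 * f (-1) + 1 * f 1| ≤ |f (-1)| + |f 1| := by
        simpa using abs_add_le (-f (-1)) (f 1)
    _ ≤ 2 * B := by linarith

lemma mul_le_abs_of_abs_le_one {c t : ℝ} (hc : |c| ≤ 1) : c * t ≤ |t| :=
  calc c * t ≤ |c| * |t| := by rw [← abs_mul]; exact le_abs_self _
    _ ≤ |t| := mul_le_of_le_one_left (abs_nonneg t) hc

lemma abs_sub_add_abs_add_le {a b B : ℝ} (ha : |a| ≤ B) (hb : |b| ≤ B) :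
    |a - b| + |a + b| ≤ 2 * B := by
  rw [abs_le] at ha hb
  rcases abs_cases (a - b) with ⟨h, _⟩ | ⟨h, _⟩ <;>
    rcases abs_cases (a + b) with ⟨h', _⟩ | ⟨h', _⟩ <;> linarith

-- The classical bound `B_S^C = 4` of the Svetlichny-type expression defined by `QS`.
lemma sum_sum_abs_sum_QS_mul_le {e : ℝ → ℝ} {B : ℝ} (h₁ : |e 1| ≤ B) (h₂ : |e (-1)| ≤ B) :
    ∑ x₁ ∈ pm, ∑ x₂ ∈ pm, |∑ x₃ ∈ pm, QS x₁ x₂ x₃ * e x₃| ≤ 4 * B := by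
  have key := abs_sub_add_abs_add_le h₁ h₂
  simp only [sum_pm]
  norm_num [QS]
  rw [neg_add_eq_sub, ← sub_eq_add_neg, abs_sub_comm (e (-1)), add_comm (e (-1))]
  linarith

lemma sum_sum_sum_mul_target {m n : ℝ → ℝ} (hm : ∀ y ∈ pm, m y ∈ pm)
    (hn : ∀ y ∈ pm, n y ∈ pm) (g : ℝ → ℝ → ℝ → ℝ) (q : ℝ) :
    ∑ y₁ ∈ pm, ∑ y₂ ∈ pm, ∑ y₃ ∈ pm, g y₃ (m y₁) (n y₂) * (y₁ * y₂ * y₃ * q) =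
      linearCoeff m * linearCoeff n *
        (q * ∑ y₃ ∈ pm, y₃ * ∑ u ∈ pm, u * ∑ v ∈ pm, v * g y₃ u v) := by
  calc _ = ∑ y₃ ∈ pm, q * y₃ * ∑ y₁ ∈ pm, y₁ * ∑ y₂ ∈ pm, y₂ * g y₃ (m y₁) (n y₂) := by
        simp only [sum_pm]; ring
    _ = _ := by
        simp only [sum_pm_mul_sum_pm_mul_comp hm hn]
        simp only [sum_pm]
        ring

lemma sum_mul_target_le (G₃ : ℝ → ℝ → ℝ → ℝ → ℝ) (m₁ m₂ : ℝ → ℝ → ℝ → ℝ)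
    (hm₁ : ∀ x₁ ∈ pm, ∀ x₂ ∈ pm, ∀ y₁ ∈ pm, m₁ x₁ x₂ y₁ ∈ pm)
    (hm₂ : ∀ x₁ ∈ pm, ∀ x₂ ∈ pm, ∀ y₂ ∈ pm, m₂ x₁ x₂ y₂ ∈ pm)
    (hG : ∀ x₃ ∈ pm, ∀ y₃ ∈ pm, ∀ u ∈ pm, ∀ v ∈ pm, |G₃ x₃ y₃ u v| ≤ 1) :
    ∑ x₁ ∈ pm, ∑ x₂ ∈ pm, ∑ x₃ ∈ pm, ∑ y₁ ∈ pm, ∑ y₂ ∈ pm, ∑ y₃ ∈ pm,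
      G₃ x₃ y₃ (m₁ x₁ x₂ y₁) (m₂ x₁ x₂ y₂) * (y₁ * y₂ * y₃ * QS x₁ x₂ x₃) ≤ 32 := by
  set e : ℝ → ℝ := fun x₃ => ∑ y₃ ∈ pm, y₃ * ∑ u ∈ pm, u * ∑ v ∈ pm, v * G₃ x₃ y₃ u v
  have he : ∀ x₃ ∈ pm, |e x₃| ≤ 2 * (2 * (2 * 1)) := fun x₃ hx₃ =>
    abs_sum_pm_mul_le fun y₃ hy₃ => abs_sum_pm_mul_le fun u hu => abs_sum_pm_mul_le fun v hv =>
      hG x₃ hx₃ y₃ hy₃ u hu v hv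
  calc _ = ∑ x₁ ∈ pm, ∑ x₂ ∈ pm, linearCoeff (m₁ x₁ x₂) * linearCoeff (m₂ x₁ x₂) *
          ∑ x₃ ∈ pm, QS x₁ x₂ x₃ * e x₃ := by
        refine sum_congr rfl fun x₁ hx₁ => sum_congr rfl fun x₂ hx₂ => ?_
        simp only [sum_sum_sum_mul_target (hm₁ x₁ hx₁ x₂ hx₂) (hm₂ x₁ hx₁ x₂ hx₂)]
        exact (mul_sum _ _ _).symm
    _ ≤ ∑ x₁ ∈ pm, ∑ x₂ ∈ pm, |∑ x₃ ∈ pm, QS x₁ x₂ x₃ * e x₃| := by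
        gcongr with x₁ hx₁ x₂ hx₂
        refine mul_le_abs_of_abs_le_one ?_
        rw [abs_mul]
        exact mul_le_one₀ (abs_linearCoeff_le_one (hm₁ x₁ hx₁ x₂ hx₂)) (abs_nonneg _)
          (abs_linearCoeff_le_one (hm₂ x₁ hx₁ x₂ hx₂))
    _ ≤ 4 * (2 * (2 * (2 * 1))) := sum_sum_abs_sum_QS_mul_le (he 1 (by simp)) (he (-1) (by simp))
    _ = 32 := by norm_num

theorem stmt_11 (G₃ : ℝ → ℝ → ℝ → ℝ → ℝ) (m₁ m₂ : ℝ → ℝ → ℝ → ℝ)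
    (hm₁ : ∀ x₁ ∈ pm, ∀ x₂ ∈ pm, ∀ y₁ ∈ pm, m₁ x₁ x₂ y₁ = 1 ∨ m₁ x₁ x₂ y₁ = -1)
    (hm₂ : ∀ x₁ ∈ pm, ∀ x₂ ∈ pm, ∀ y₂ ∈ pm, m₂ x₁ x₂ y₂ = 1 ∨ m₂ x₁ x₂ y₂ = -1)
    (hG : ∀ x₃ ∈ pm, ∀ y₃ ∈ pm, ∀ u ∈ pm, ∀ v ∈ pm,
      G₃ x₃ y₃ u v = 1 ∨ G₃ x₃ y₃ u v = -1) :
    (1 / 64 : ℝ) * ∑ x₁ ∈ pm, ∑ x₂ ∈ pm, ∑ x₃ ∈ pm, ∑ y₁ ∈ pm, ∑ y₂ ∈ pm, ∑ y₃ ∈ pm,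
        (if G₃ x₃ y₃ (m₁ x₁ x₂ y₁) (m₂ x₁ x₂ y₂) = y₁ * y₂ * y₃ * QS x₁ x₂ x₃
          then (1 : ℝ) else 0) ≤ 3 / 4 := by
  simp only [← mem_pm_iff] at hm₁ hm₂ hG
  have hcorr := sum_mul_target_le G₃ m₁ m₂ hm₁ hm₂
    fun x₃ h₃ y₃ h u hu v hv => abs_le_one_of_mem_pm (hG x₃ h₃ y₃ h u hu v hv)
  calc _ = (1 / 64 : ℝ) * ∑ x₁ ∈ pm, ∑ x₂ ∈ pm, ∑ x₃ ∈ pm, ∑ y₁ ∈ pm, ∑ y₂ ∈ pm, ∑ y₃ ∈ pm,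
        (1 + G₃ x₃ y₃ (m₁ x₁ x₂ y₁) (m₂ x₁ x₂ y₂) * (y₁ * y₂ * y₃ * QS x₁ x₂ x₃)) / 2 := by
        congr 1
        refine sum_congr rfl fun x₁ hx₁ => sum_congr rfl fun x₂ hx₂ => sum_congr rfl fun x₃ hx₃ =>
          sum_congr rfl fun y₁ hy₁ => sum_congr rfl fun y₂ hy₂ => sum_congr rfl fun y₃ hy₃ => ?_
        exact ite_eq_eq_one_add_mul_div_two (hG x₃ hx₃ y₃ hy₃ _ (hm₁ x₁ hx₁ x₂ hx₂ y₁ hy₁) _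
          (hm₂ x₁ hx₁ x₂ hx₂ y₂ hy₂))
          (mul_mem_pm (mul_mem_pm (mul_mem_pm hy₁ hy₂) hy₃) (QS_mem_pm hx₁ hx₂ hx₃))
    _ = 1 / 2 + (1 / 128 : ℝ) * ∑ x₁ ∈ pm, ∑ x₂ ∈ pm, ∑ x₃ ∈ pm, ∑ y₁ ∈ pm, ∑ y₂ ∈ pm, ∑ y₃ ∈ pm,
        G₃ x₃ y₃ (m₁ x₁ x₂ y₁) (m₂ x₁ x₂ y₂) * (y₁ * y₂ * y₃ * QS x₁ x₂ x₃) := by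
        simp only [add_div, sum_add_distrib, ← sum_div]
        norm_num
        ring
    _ ≤ 3 / 4 := by linarith
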